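/- If graphs G and H both admit interval colorings, then their Cartesian product G □ H admits an interval coloring; moreover w(G □ H) ≤ w(G) + w(H) and W(G □ H) ≥ W(G) + W(H). -/

import Mathlib

open SimpleGraph

/-- `c` is an interval `t`-coloring of `G`: edges get colors in `{1,…,t}`, every color
`1,…,t` is used, adjacent edges get distinct colors, and the set of colors of edges
incident to any vertex is an interval of integers. -/
def IsIntervalColoring {V : Type*} (G : SimpleGraph V) (t : ℕ) (c : Sym2 V → ℕ) : Prop :=
  (∀ e ∈ G.edgeSet, 1 ≤ c e ∧ c e ≤ t) ∧
  (∀ i, 1 ≤ i → i ≤ t → ∃ e ∈ G.edgeSet, c e = i) ∧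
  (∀ v w₁ w₂, G.Adj v w₁ → G.Adj v w₂ → w₁ ≠ w₂ → c s(v, w₁) ≠ c s(v, w₂)) ∧
  (∀ v i j k, (∃ w, G.Adj v w ∧ c s(v, w) = i) → (∃ w, G.Adj v w ∧ c s(v, w) = k) →
    i ≤ j → j ≤ k → ∃ w, G.Adj v w ∧ c s(v, w) = j)

/-- `G` has an interval `t`-coloring. -/
def HasIntervalColoring {V : Type*} (G : SimpleGraph V) (t : ℕ) : Prop :=
  ∃ c : Sym2 V → ℕ, IsIntervalColoring G t c

/-- `G` is interval colorable (`G ∈ 𝔑`). -/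
def IntervalColorable {V : Type*} (G : SimpleGraph V) : Prop :=
  ∃ t : ℕ, 1 ≤ t ∧ HasIntervalColoring G t

/-- `w G`: the least number of colors in an interval coloring of `G`. -/
noncomputable def wNum {V : Type*} (G : SimpleGraph V) : ℕ :=
  sInf {t | HasIntervalColoring G t}

/-- `W G`: the greatest number of colors in an interval coloring of `G`. -/
noncomputable def WNum {V : Type*} (G : SimpleGraph V) : ℕ :=
  sSup {t | HasIntervalColoring G t}

/-- `G` is `r`-regular: every vertex has exactly `r` neighbors. -/
def IsRegularGraph {V : Type*} (G : SimpleGraph V) (r : ℕ) : Prop :=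
  ∀ v : V, (G.neighborSet v).ncard = r

/-- `c` is a proper edge coloring of `G` using colors `0,…,k-1`. -/
def IsProperEdgeColoring {V : Type*} (G : SimpleGraph V) (k : ℕ) (c : Sym2 V → ℕ) : Prop :=
  (∀ e ∈ G.edgeSet, c e < k) ∧
  (∀ v w₁ w₂, G.Adj v w₁ → G.Adj v w₂ → w₁ ≠ w₂ → c s(v, w₁) ≠ c s(v, w₂))

/-- The chromatic index `χ'(G)`. -/
noncomputable def edgeChromaticNumber {V : Type*} (G : SimpleGraph V) : ℕ :=
  sInf {k | ∃ c : Sym2 V → ℕ, IsProperEdgeColoring G k c}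

/-- `G` is 1-factorable: its edge set decomposes into perfect matchings. -/
def IsOneFactorable {V : Type*} (G : SimpleGraph V) : Prop :=
  ∃ (n : ℕ) (f : Fin n → SimpleGraph.Subgraph G),
    (∀ i, (f i).IsPerfectMatching) ∧
    (∀ e ∈ G.edgeSet, ∃! i, e ∈ (f i).edgeSet)

/-- The tensor (direct) product `G × H`. -/
def tensorProd {α β : Type*} (G : SimpleGraph α) (H : SimpleGraph β) :
    SimpleGraph (α × β) where
  Adj p q := G.Adj p.1 q.1 ∧ H.Adj p.2 q.2
  symm := ⟨fun p q ⟨h₁, h₂⟩ => ⟨h₁.symm, h₂.symm⟩⟩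
  loopless := ⟨fun p h => G.loopless.irrefl p.1 h.1⟩

/-- The strong tensor (semistrong) product `G ⊗ H`. -/
def strongTensorProd {α β : Type*} (G : SimpleGraph α) (H : SimpleGraph β) :
    SimpleGraph (α × β) where
  Adj p q := (G.Adj p.1 q.1 ∧ H.Adj p.2 q.2) ∨ (p.2 = q.2 ∧ G.Adj p.1 q.1)
  symm := ⟨fun p q h => by
    rcases h with ⟨h₁, h₂⟩ | ⟨h₁, h₂⟩
    · exact Or.inl ⟨h₁.symm, h₂.symm⟩
    · exact Or.inr ⟨h₁.symm, h₂.symm⟩⟩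
  loopless := ⟨fun p h => by
    rcases h with ⟨h₁, _⟩ | ⟨_, h₁⟩ <;> exact G.loopless.irrefl p.1 h₁⟩

/-- The strong product `G ⊠ H`. -/
def strongProd {α β : Type*} (G : SimpleGraph α) (H : SimpleGraph β) :
    SimpleGraph (α × β) where
  Adj p q := (G.Adj p.1 q.1 ∧ H.Adj p.2 q.2) ∨ (p.1 = q.1 ∧ H.Adj p.2 q.2) ∨
    (p.2 = q.2 ∧ G.Adj p.1 q.1)
  symm := ⟨fun p q h => by
    rcases h with ⟨h₁, h₂⟩ | ⟨h₁, h₂⟩ | ⟨h₁, h₂⟩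
    · exact Or.inl ⟨h₁.symm, h₂.symm⟩
    · exact Or.inr (Or.inl ⟨h₁.symm, h₂.symm⟩)
    · exact Or.inr (Or.inr ⟨h₁.symm, h₂.symm⟩)⟩
  loopless := ⟨fun p h => by
    rcases h with ⟨h₁, _⟩ | ⟨_, h₂⟩ | ⟨_, h₁⟩
    · exact G.loopless.irrefl p.1 h₁
    · exact H.loopless.irrefl p.2 h₂
    · exact G.loopless.irrefl p.1 h₁⟩

/-- The lexicographic product (composition) `G[H]`. -/
def lexProd {α β : Type*} (G : SimpleGraph α) (H : SimpleGraph β) :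
    SimpleGraph (α × β) where
  Adj p q := G.Adj p.1 q.1 ∨ (p.1 = q.1 ∧ H.Adj p.2 q.2)
  symm := ⟨fun p q h => by
    rcases h with h₁ | ⟨h₁, h₂⟩
    · exact Or.inl h₁.symm
    · exact Or.inr ⟨h₁.symm, h₂.symm⟩⟩
  loopless := ⟨fun p h => by
    rcases h with h₁ | ⟨_, h₂⟩
    · exact G.loopless.irrefl p.1 h₁
    · exact H.loopless.irrefl p.2 h₂⟩

/-! At a vertex `(u, v)` of `G □ H`, color the `G`-edges by the `G`-colors of `u` shifted by
`m - 1` and the `H`-edges by the `H`-colors of `v` shifted by `M`, where `m` is the least color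
at `v` and `M` the greatest at `u`. The two shifted intervals then abut
(`M + (m - 1) + 1 = m + M`), so the colors at every vertex still form an interval; the shifts
depend only on `v` resp. `u`, so both ends of an edge agree on its color. Combining `w`-colorings
(resp. `W`-colorings) of `G` and `H` gives a `(w G + w H)`- (resp. `(W G + W H)`-) coloring. -/

section NatSets

variable {A B : Set ℕ}

theorem Nat.sInf_le_of_subset_Iic {b : ℕ} (h : A ⊆ Set.Iic b) : sInf A ≤ b := by
  rcases A.eq_empty_or_nonempty with rfl | hA
  · simp
  · exact h (Nat.sInf_mem hA)

theorem add_sInf_sub_one_lt_add_sSup (hA : BddAbove A) (hB : 0 ∉ B) {a b : ℕ}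
    (ha : a ∈ A) (hb : b ∈ B) : a + (sInf B - 1) < b + sSup A := by
  have haA := le_csSup hA ha
  have hbB := Nat.sInf_le hb
  have hB₀ : sInf B ≠ 0 := fun h => hB (h ▸ Nat.sInf_mem ⟨b, hb⟩)
  omega

theorem Set.OrdConnected.image_add_sInf_union_image_add_sSup (hA : A.OrdConnected)
    (hB : B.OrdConnected) (hAb : BddAbove A) (hB₀ : 0 ∉ B) :
    ((· + (sInf B - 1)) '' A ∪ (· + sSup A) '' B).OrdConnected := by
  refine ⟨?_⟩
  rintro _ (⟨a, ha, rfl⟩ | ⟨b, hb, rfl⟩) _ (⟨a', ha', rfl⟩ | ⟨b', hb', rfl⟩) j ⟨hj₁, hj₂⟩ <;>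
    dsimp only at hj₁ hj₂
  · exact .inl ⟨j - (sInf B - 1), hA.out ha ha' ⟨by omega, by omega⟩, by dsimp only; omega⟩
  · have hA_le := le_csSup hAb ha
    have hB_le := Nat.sInf_le hb'
    by_cases hj : j ≤ sSup A + (sInf B - 1)
    · exact .inl ⟨j - (sInf B - 1), hA.out ha (Nat.sSup_mem ⟨a, ha⟩ hAb) ⟨by omega, by omega⟩,
        by dsimp only; omega⟩
    · exact .inr ⟨j - sSup A, hB.out (Nat.sInf_mem ⟨b', hb'⟩) hb' ⟨by omega, by omega⟩,
        by dsimp only; omega⟩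
  · have := add_sInf_sub_one_lt_add_sSup hAb hB₀ ha' hb
    omega
  · exact .inr ⟨j - sSup A, hB.out hb hb' ⟨by omega, by omega⟩, by dsimp only; omega⟩

end NatSets

namespace SimpleGraph

variable {V α β : Type*} {G : SimpleGraph α} {H : SimpleGraph β}

def incidentColors (G : SimpleGraph V) (c : Sym2 V → ℕ) (v : V) : Set ℕ :=
  {i | ∃ w, G.Adj v w ∧ c s(v, w) = i}

theorem isIntervalColoring_iff {G : SimpleGraph V} {t : ℕ} {c : Sym2 V → ℕ} :
    IsIntervalColoring G t c ↔
      (∀ v, G.incidentColors c v ⊆ Set.Icc 1 t) ∧ Set.Icc 1 t ⊆ ⋃ v, G.incidentColors c v ∧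
      (∀ v, (G.neighborSet v).InjOn fun w => c s(v, w)) ∧
      ∀ v, (G.incidentColors c v).OrdConnected := by
  have hrange : (∀ e ∈ G.edgeSet, 1 ≤ c e ∧ c e ≤ t) ↔
      ∀ v, G.incidentColors c v ⊆ Set.Icc 1 t := by
    refine ⟨fun h v => ?_, fun h e he => ?_⟩
    · rintro _ ⟨w, hw, rfl⟩
      exact h _ hw
    · induction e using Sym2.ind with
      | _ v w => exact h v ⟨w, he, rfl⟩
  have hsurj : (∀ i, 1 ≤ i → i ≤ t → ∃ e ∈ G.edgeSet, c e = i) ↔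
      Set.Icc 1 t ⊆ ⋃ v, G.incidentColors c v := by
    refine forall_congr' fun i => ?_
    simp only [Set.mem_Icc, Set.mem_iUnion, incidentColors, Set.mem_ofPred_eq, and_imp,
      Sym2.exists, mem_edgeSet]
  have hproper : (∀ v w₁ w₂, G.Adj v w₁ → G.Adj v w₂ → w₁ ≠ w₂ → c s(v, w₁) ≠ c s(v, w₂)) ↔
      ∀ v, (G.neighborSet v).InjOn fun w => c s(v, w) := by
    refine forall_congr' fun v => ⟨fun h w₁ h₁ w₂ h₂ => ?_, fun h w₁ w₂ h₁ h₂ => ?_⟩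
    · exact not_imp_not.mp (h w₁ w₂ h₁ h₂)
    · exact mt (h h₁ h₂)
  have hinterval : (∀ v i j k, (∃ w, G.Adj v w ∧ c s(v, w) = i) →
      (∃ w, G.Adj v w ∧ c s(v, w) = k) → i ≤ j → j ≤ k → ∃ w, G.Adj v w ∧ c s(v, w) = j) ↔
      ∀ v, (G.incidentColors c v).OrdConnected := by
    refine forall_congr' fun v => (Set.ordConnected_def.trans ?_).symm
    exact ⟨fun h i j k hi hk hij hjk => h hi hk ⟨hij, hjk⟩,
      fun h i hi k hk j hj => h i j k hi hk hj.1 hj.2⟩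
  rw [IsIntervalColoring, hrange, hsurj, hproper, hinterval]

-- For `v` isolated in `H`, `sInf ∅ - 1 = 0` leaves the `G`-colors at `(u, v)` unshifted.
variable (G H) in
open Classical in
noncomputable def boxProdColoring (cG : Sym2 α → ℕ) (cH : Sym2 β → ℕ) : Sym2 (α × β) → ℕ :=
  Sym2.lift ⟨fun p q =>
    if p.2 = q.2 then cG s(p.1, q.1) + (sInf (H.incidentColors cH p.2) - 1)
    else if p.1 = q.1 then cH s(p.2, q.2) + sSup (G.incidentColors cG p.1) else 0,
    fun p q => by
      by_cases h₂ : p.2 = q.2 <;> by_cases h₁ : p.1 = q.1 <;>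
        simp [h₁, h₂, eq_comm (a := q.1), eq_comm (a := q.2), Sym2.eq_swap]⟩

variable {cG : Sym2 α → ℕ} {cH : Sym2 β → ℕ}

@[simp]
theorem boxProdColoring_mk_left (u u' : α) (v : β) :
    boxProdColoring G H cG cH s((u, v), (u', v)) =
      cG s(u, u') + (sInf (H.incidentColors cH v) - 1) := by
  simp [boxProdColoring]

@[simp]
theorem boxProdColoring_mk_right (u : α) {v v' : β} (h : v ≠ v') :
    boxProdColoring G H cG cH s((u, v), (u, v')) =
      cH s(v, v') + sSup (G.incidentColors cG u) := by
  simp [boxProdColoring, h]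

theorem incidentColors_boxProd (u : α) (v : β) :
    (G □ H).incidentColors (boxProdColoring G H cG cH) (u, v) =
      (· + (sInf (H.incidentColors cH v) - 1)) '' G.incidentColors cG u ∪
        (· + sSup (G.incidentColors cG u)) '' H.incidentColors cH v := by
  ext j
  constructor
  · rintro ⟨⟨u', v'⟩, hadj, rfl⟩
    rcases boxProd_adj.mp hadj with ⟨hu, rfl : v = v'⟩ | ⟨hv, rfl : u = u'⟩
    · exact .inl ⟨_, ⟨u', hu, rfl⟩, (boxProdColoring_mk_left u u' v).symm⟩
    · exact .inr ⟨_, ⟨v', hv, rfl⟩, (boxProdColoring_mk_right u hv.ne).symm⟩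
  · rintro (⟨_, ⟨u', hu, rfl⟩, rfl⟩ | ⟨_, ⟨v', hv, rfl⟩, rfl⟩)
    · exact ⟨(u', v), boxProd_adj.mpr (.inl ⟨hu, rfl⟩), boxProdColoring_mk_left u u' v⟩
    · exact ⟨(u, v'), boxProd_adj.mpr (.inr ⟨hv, rfl⟩), boxProdColoring_mk_right u hv.ne⟩

theorem injOn_boxProdColoring (hGp : ∀ u, (G.neighborSet u).InjOn fun u' => cG s(u, u'))
    (hHp : ∀ v, (H.neighborSet v).InjOn fun v' => cH s(v, v'))
    (hGb : ∀ u, BddAbove (G.incidentColors cG u)) (hH₀ : ∀ v, 0 ∉ H.incidentColors cH v)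
    (p : α × β) : ((G □ H).neighborSet p).InjOn fun q => boxProdColoring G H cG cH s(p, q) := by
  obtain ⟨u, v⟩ := p
  rintro ⟨u₁, v₁⟩ h₁ ⟨u₂, v₂⟩ h₂ heq
  rcases boxProd_adj.mp h₁ with ⟨hu₁, rfl : v = v₁⟩ | ⟨hv₁, rfl : u = u₁⟩ <;>
    rcases boxProd_adj.mp h₂ with ⟨hu₂, rfl : v = v₂⟩ | ⟨hv₂, rfl : u = u₂⟩
  · simp only [boxProdColoring_mk_left, Nat.add_right_cancel_iff] at heq
    exact Prod.ext (hGp u hu₁ hu₂ heq) rfl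
  · simp only [boxProdColoring_mk_left, boxProdColoring_mk_right u hv₂.ne] at heq
    exact absurd heq
      (add_sInf_sub_one_lt_add_sSup (hGb u) (hH₀ v) ⟨u₁, hu₁, rfl⟩ ⟨v₂, hv₂, rfl⟩).ne
  · simp only [boxProdColoring_mk_left, boxProdColoring_mk_right u hv₁.ne] at heq
    exact absurd heq.symm
      (add_sInf_sub_one_lt_add_sSup (hGb u) (hH₀ v) ⟨u₂, hu₂, rfl⟩ ⟨v₁, hv₁, rfl⟩).ne
  · simp only [boxProdColoring_mk_right u hv₁.ne, boxProdColoring_mk_right u hv₂.ne,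
      Nat.add_right_cancel_iff] at heq
    exact Prod.ext rfl (hHp v hv₁ hv₂ heq)

end SimpleGraph

section BoxProd

variable {α β : Type*} {G : SimpleGraph α} {H : SimpleGraph β} {t s : ℕ}

theorem IsIntervalColoring.boxProd {cG : Sym2 α → ℕ} {cH : Sym2 β → ℕ}
    (hG : IsIntervalColoring G t cG) (hH : IsIntervalColoring H s cH) (ht : 1 ≤ t) (hs : 1 ≤ s) :
    IsIntervalColoring (G □ H) (t + s) (boxProdColoring G H cG cH) := by
  rw [isIntervalColoring_iff] at hG hH ⊢
  obtain ⟨hGr, hGs, hGp, hGi⟩ := hG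
  obtain ⟨hHr, hHs, hHp, hHi⟩ := hH
  have hGb u : BddAbove (G.incidentColors cG u) := ⟨t, fun i hi => (hGr u hi).2⟩
  have hGt u : sSup (G.incidentColors cG u) ≤ t := csSup_le' fun i hi => (hGr u hi).2
  have hH₀ v : 0 ∉ H.incidentColors cH v := fun h => Nat.not_succ_le_zero 0 (hHr v h).1
  refine ⟨?_, ?_, ?_, fun ⟨u, v⟩ => ?_⟩
  · rintro ⟨u, v⟩ _ hj
    rw [incidentColors_boxProd] at hj
    have hm := Nat.sInf_le_of_subset_Iic fun _ hb => (hHr v hb).2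
    rcases hj with ⟨a, ha, rfl⟩ | ⟨b, hb, rfl⟩
    · have ha' := hGr u ha
      simp only [Set.mem_Icc] at ha' ⊢
      omega
    · have hb' := hHr v hb
      have hM := hGt u
      simp only [Set.mem_Icc] at hb' ⊢
      omega
  · obtain ⟨v₀, hv₀⟩ := Set.mem_iUnion.mp (hHs ⟨le_rfl, hs⟩)
    obtain ⟨u₀, hu₀⟩ := Set.mem_iUnion.mp (hGs ⟨ht, le_rfl⟩)
    have hinf : sInf (H.incidentColors cH v₀) = 1 :=
      le_antisymm (Nat.sInf_le hv₀) (hHr v₀ (Nat.sInf_mem ⟨1, hv₀⟩)).1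
    have hsup : sSup (G.incidentColors cG u₀) = t := le_antisymm (hGt u₀) (le_csSup (hGb u₀) hu₀)
    rintro i ⟨hi₁, hi₂⟩
    rw [Set.mem_iUnion]
    by_cases hit : i ≤ t
    · obtain ⟨u, hu⟩ := Set.mem_iUnion.mp (hGs ⟨hi₁, hit⟩)
      refine ⟨(u, v₀), ?_⟩
      rw [incidentColors_boxProd, hinf]
      exact .inl ⟨i, hu, rfl⟩
    · obtain ⟨v, hv⟩ :=
        Set.mem_iUnion.mp (hHs (show i - t ∈ Set.Icc 1 s from ⟨by omega, by omega⟩))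
      refine ⟨(u₀, v), ?_⟩
      rw [incidentColors_boxProd, hsup]
      exact .inr ⟨i - t, hv, by dsimp only; omega⟩
  · exact injOn_boxProdColoring hGp hHp hGb hH₀
  · rw [incidentColors_boxProd]
    exact (hGi u).image_add_sInf_union_image_add_sSup (hHi v) (hGb u) (hH₀ v)

end BoxProd

theorem HasIntervalColoring.boxProd {α β : Type*} {G : SimpleGraph α} {H : SimpleGraph β}
    {t s : ℕ} (hG : HasIntervalColoring G t) (hH : HasIntervalColoring H s) (ht : 1 ≤ t)
    (hs : 1 ≤ s) : HasIntervalColoring (G □ H) (t + s) :=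
  let ⟨_, hcG⟩ := hG
  let ⟨_, hcH⟩ := hH
  ⟨_, hcG.boxProd hcH ht hs⟩

section Extremal

variable {V : Type*} {G : SimpleGraph V} {t : ℕ}

theorem IntervalColorable.one_le (hG : IntervalColorable G) (h : HasIntervalColoring G t) :
    1 ≤ t := by
  obtain ⟨t₀, ht₀, c₀, -, hc₀, -⟩ := hG
  obtain ⟨e, he, -⟩ := hc₀ 1 le_rfl ht₀
  obtain ⟨c, hc, -⟩ := h
  exact (hc e he).1.trans (hc e he).2

theorem bddAbove_setOf_hasIntervalColoring [Finite V] :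
    BddAbove {t | HasIntervalColoring G t} := by
  refine ⟨Nat.card (Sym2 V), ?_⟩
  rintro t ⟨c, -, hc, -⟩
  calc t = (Set.Icc 1 t).ncard := by simp
    _ ≤ (c '' G.edgeSet).ncard :=
      Set.ncard_le_ncard (fun i hi => hc i hi.1 hi.2) (Set.toFinite _)
    _ ≤ G.edgeSet.ncard := Set.ncard_image_le (Set.toFinite _)
    _ ≤ Nat.card (Sym2 V) := Set.ncard_le_card _

theorem IntervalColorable.hasIntervalColoring_wNum (hG : IntervalColorable G) :
    HasIntervalColoring G (wNum G) :=
  Nat.sInf_mem (hG.imp fun _ h => h.2)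

theorem IntervalColorable.hasIntervalColoring_WNum [Finite V] (hG : IntervalColorable G) :
    HasIntervalColoring G (WNum G) :=
  Nat.sSup_mem (hG.imp fun _ h => h.2) bddAbove_setOf_hasIntervalColoring

theorem HasIntervalColoring.wNum_le (h : HasIntervalColoring G t) : wNum G ≤ t :=
  Nat.sInf_le h

theorem HasIntervalColoring.le_WNum [Finite V] (h : HasIntervalColoring G t) : t ≤ WNum G :=
  le_csSup bddAbove_setOf_hasIntervalColoring h

end Extremal

/-- If `G, H ∈ 𝔑`, then `G □ H ∈ 𝔑`; moreover `w(G □ H) ≤ w(G) + w(H)` and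
`W(G □ H) ≥ W(G) + W(H)`. -/
theorem boxProd_interval_colorable {α β : Type*} [Fintype α] [Fintype β]
    (G : SimpleGraph α) (H : SimpleGraph β)
    (hG : IntervalColorable G) (hH : IntervalColorable H) :
    IntervalColorable (G □ H) ∧
    wNum (G □ H) ≤ wNum G + wNum H ∧
    WNum (G □ H) ≥ WNum G + WNum H := by
  have hwG := hG.hasIntervalColoring_wNum
  have hwH := hH.hasIntervalColoring_wNum
  have hWG := hG.hasIntervalColoring_WNum
  have hWH := hH.hasIntervalColoring_WNum
  have hw := hwG.boxProd hwH (hG.one_le hwG) (hH.one_le hwH)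
  have hW := hWG.boxProd hWH (hG.one_le hWG) (hH.one_le hWH)
  exact ⟨⟨_, le_add_right (hG.one_le hwG), hw⟩, hw.wNum_le, hW.le_WNum⟩
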